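/- arXiv:1402.0303 — 4 statements merged into one kernel-verified Lean document; each statement's English description precedes it below -/
import Mathlib

section
/- Let q(x) = a_1*x_1^2 + a_2*x_2^2 + a_3*x_3^2 be an integral quadratic form and let p be an odd prime dividing a_1 but not a_2 and not a_3. If -a_2*a_3 is a quadratic residue modulo p, then for every n ≥ 1 the number of solutions (x_1,x_2,x_3) modulo p^n of q(x) ≡ 0 (mod p^n) with p not dividing x_3 is at least (2)*(1 - 1/p)*p^{2n}. -/
/-!
Fix `x₁` and a unit `x₃`; a solution is then a square root `x₂` of
`w = -(a₁ x₁² + a₃ x₃²) / a₂` in `ZMod (p ^ n)`. Modulo `p` the `a₁`-term vanishes, so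
`w ≡ -a₂ a₃ (x₃ / a₂)²` is a nonzero square. `ZMod (p ^ n)` is an Artinian local ring, hence
Henselian, and since `p` is odd the derivative `2 x₂` of `X² - w` is a unit, so this square
root lifts to a pair of distinct roots `±x₂` modulo `p ^ n`. Counting the choices of `x₁`,
`x₃` and the sign gives `2 pⁿ φ(pⁿ) = 2 (1 - 1/p) p²ⁿ` solutions.
-/

open Polynomial IsLocalRing

namespace ZMod

variable {p n : ℕ} [Fact p.Prime]

theorem isUnit_iff_castHom_ne_zero (hn : n ≠ 0) (x : ZMod (p ^ n)) :
    IsUnit x ↔ castHom (dvd_pow_self p hn) (ZMod p) x ≠ 0 := by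
  rw [← natCast_zmod_val x, map_natCast, isUnit_natCast_iff_not_dvd_pow Fact.out (by omega),
    Ne, natCast_eq_zero_iff]

theorem isLocalRing_prime_pow (hn : n ≠ 0) : IsLocalRing (ZMod (p ^ n)) :=
  have : Nontrivial (ZMod (p ^ n)) := (castHom (dvd_pow_self p hn) (ZMod p)).domain_nontrivial
  .of_isUnit_or_isUnit_one_sub_self fun a => by
    simp only [isUnit_iff_castHom_ne_zero hn, map_sub, map_one]
    by_cases ha : castHom (dvd_pow_self p hn) (ZMod p) a = 0
    · simp [ha]
    · exact .inl ha

theorem ne_neg_self_of_isUnit (hp2 : p ≠ 2) (hn : n ≠ 0) {t : ZMod (p ^ n)} (ht : IsUnit t) :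
    t ≠ -t := fun h =>
  (isUnit_iff_castHom_ne_zero hn t).mp ht <|
    (Ring.eq_self_iff_eq_zero_of_char_ne_two (by rwa [ringChar_zmod_n])).mp
      (by rw [← map_neg, ← h])

theorem isSquare_of_isSquare_castHom (hp2 : p ≠ 2) (hn : n ≠ 0) {w : ZMod (p ^ n)}
    (hsq : IsSquare (castHom (dvd_pow_self p hn) (ZMod p) w))
    (hw : castHom (dvd_pow_self p hn) (ZMod p) w ≠ 0) : IsSquare w := by
  have := isLocalRing_prime_pow (p := p) hn
  set φ := castHom (dvd_pow_self p hn) (ZMod p)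
  have mem_max : ∀ x, x ∈ maximalIdeal (ZMod (p ^ n)) ↔ φ x = 0 := fun x => by
    rw [mem_maximalIdeal, mem_nonunits_iff, isUnit_iff_castHom_ne_zero hn, not_not]
  obtain ⟨s, hs⟩ := hsq
  obtain ⟨a₀, rfl⟩ := castHom_surjective (dvd_pow_self p hn) s
  have ha₀ : φ a₀ ≠ 0 := fun h => hw (by rw [hs, h, mul_zero])
  obtain ⟨t, ht, -⟩ := HenselianRing.is_henselian (X ^ 2 - C w)
    (monic_X_pow_sub_C w two_ne_zero) a₀
    (by rw [eval_sub, eval_pow, eval_X, eval_C, mem_max, map_sub, map_pow, hs, sq, sub_self])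
    (by
      refine IsUnit.map _ ((isUnit_iff_castHom_ne_zero hn _).mpr ?_)
      rw [derivative_sub, derivative_X_pow, derivative_C, sub_zero, eval_mul, eval_C, eval_pow,
        eval_X, map_mul, map_pow, pow_one, Nat.cast_ofNat, map_ofNat]
      exact mul_ne_zero (Ring.two_ne_zero (by rwa [ringChar_zmod_n])) ha₀)
  rw [IsRoot, eval_sub, eval_pow, eval_X, eval_C, sub_eq_zero] at ht
  exact ⟨t, by rw [← ht, sq]⟩

theorem exists_quadric_root_ne_neg (hp2 : p ≠ 2) (hn : n ≠ 0) {a₁ a₂ a₃ : ℤ}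
    (h1 : (p : ℤ) ∣ a₁) (h2 : ¬ (p : ℤ) ∣ a₂) (h3 : ¬ (p : ℤ) ∣ a₃)
    (hres : IsSquare ((-a₂ * a₃ : ℤ) : ZMod p)) (x₁ : ZMod (p ^ n)) (x₃ : (ZMod (p ^ n))ˣ) :
    ∃ t, (a₁ : ZMod (p ^ n)) * x₁ ^ 2 + a₂ * t ^ 2 + a₃ * x₃ ^ 2 = 0 ∧ t ≠ -t := by
  set φ := castHom (dvd_pow_self p hn) (ZMod p)
  have cast_eq_zero_iff (a : ℤ) : (a : ZMod p) = 0 ↔ (p : ℤ) ∣ a :=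
    intCast_zmod_eq_zero_iff_dvd a p
  obtain ⟨b, hb⟩ := ((isUnit_iff_castHom_ne_zero hn (a₂ : ZMod (p ^ n))).mpr
    (by rwa [map_intCast, Ne, cast_eq_zero_iff])).exists_right_inv
  have hφb : (a₂ : ZMod p) * φ b = 1 := by simpa using congrArg φ hb
  set w := -((a₁ : ZMod (p ^ n)) * x₁ ^ 2 + a₃ * x₃ ^ 2) * b
  have hφw : φ w = ((-a₂ * a₃ : ℤ) : ZMod p) * (φ x₃ * φ b) ^ 2 := by
    simp only [w, map_mul, map_neg, map_add, map_pow, map_intCast, (cast_eq_zero_iff a₁).mpr h1]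
    push_cast
    linear_combination (a₃ * φ x₃ ^ 2 * φ b) * hφb
  have hw : φ w ≠ 0 := by
    rw [hφw, Int.cast_mul, Int.cast_neg]
    refine mul_ne_zero (mul_ne_zero (neg_ne_zero.mpr ?_) ?_) (pow_ne_zero _ ?_)
    · rwa [Ne, cast_eq_zero_iff]
    · rwa [Ne, cast_eq_zero_iff]
    · exact mul_ne_zero ((isUnit_iff_castHom_ne_zero hn _).mp x₃.isUnit)
        (right_ne_zero_of_mul_eq_one hφb)
  obtain ⟨t, ht⟩ := isSquare_of_isSquare_castHom hp2 hn (hφw ▸ hres.mul (.sq _)) hw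
  have ht_unit : IsUnit t :=
    isUnit_mul_self_iff.mp (ht ▸ (isUnit_iff_castHom_ne_zero hn w).mpr hw)
  refine ⟨t, ?_, ne_neg_self_of_isUnit hp2 hn ht_unit⟩
  linear_combination (-(a₂ : ZMod (p ^ n))) * ht +
    (-((a₁ : ZMod (p ^ n)) * x₁ ^ 2 + a₃ * x₃ ^ 2)) * hb

end ZMod

theorem card_mul_card_units_mul_two_le_card_diagonal_quadric {R : Type*} [CommRing R]
    [Finite R] (a₁ a₂ a₃ : R)
    (h : ∀ (x₁ : R) (x₃ : Rˣ), ∃ t, a₁ * x₁ ^ 2 + a₂ * t ^ 2 + a₃ * x₃ ^ 2 = 0 ∧ t ≠ -t) :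
    Nat.card R * Nat.card Rˣ * 2 ≤
      Nat.card {x : R × R × R // a₁ * x.1 ^ 2 + a₂ * x.2.1 ^ 2 + a₃ * x.2.2 ^ 2 = 0 ∧
        IsUnit x.2.2} := by
  choose t ht hne using h
  let f : R × Rˣ × Bool → {x : R × R × R // a₁ * x.1 ^ 2 + a₂ * x.2.1 ^ 2 + a₃ * x.2.2 ^ 2 = 0 ∧
      IsUnit x.2.2} := fun ⟨x₁, x₃, b⟩ =>
    ⟨(x₁, cond b (t x₁ x₃) (-t x₁ x₃), x₃), by
      cases b <;> simpa [neg_sq] using ht x₁ x₃⟩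
  have hf : Function.Injective f := by
    rintro ⟨x₁, x₃, b⟩ ⟨y₁, y₃, c⟩ hxy
    simp only [f, Subtype.mk.injEq, Prod.mk.injEq, Units.val_inj] at hxy
    obtain ⟨rfl, h₂, rfl⟩ := hxy
    cases b <;> cases c <;> simp only [cond_true, cond_false] at h₂
    · rfl
    · exact absurd h₂.symm (hne x₁ x₃)
    · exact absurd h₂ (hne x₁ x₃)
    · rfl
  simpa [Nat.card_prod, mul_assoc] using Nat.card_le_card_of_injective f hf

theorem Nat.Prime.two_mul_one_sub_one_div_mul_pow_eq_totient {p : ℕ} (hp : p.Prime) {n : ℕ}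
    (hn : n ≠ 0) :
    (2 : ℝ) * (1 - 1 / p) * (p : ℝ) ^ (2 * n) = ((p ^ n * (p ^ n).totient * 2 : ℕ) : ℝ) := by
  obtain ⟨m, rfl⟩ : ∃ m, n = m + 1 := ⟨n - 1, by omega⟩
  rw [Nat.totient_prime_pow_succ hp]
  have hp0 : (p : ℝ) ≠ 0 := Nat.cast_ne_zero.mpr hp.ne_zero
  push_cast [Nat.cast_sub hp.one_le]
  field_simp
  ring

theorem stmt_1 (a₁ a₂ a₃ : ℤ) (p : ℕ) (hp : p.Prime) (hodd : p ≠ 2)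
    (h1 : (p : ℤ) ∣ a₁) (h2 : ¬ (p : ℤ) ∣ a₂) (h3 : ¬ (p : ℤ) ∣ a₃)
    (hres : IsSquare ((-a₂ * a₃ : ℤ) : ZMod p))
    (n : ℕ) (hn : 1 ≤ n) :
    (2 : ℝ) * (1 - 1 / p) * (p : ℝ) ^ (2 * n) ≤
      Nat.card {x : ZMod (p ^ n) × ZMod (p ^ n) × ZMod (p ^ n) //
        (a₁ : ZMod (p ^ n)) * x.1 ^ 2 + a₂ * x.2.1 ^ 2 + a₃ * x.2.2 ^ 2 = 0 ∧
          IsUnit x.2.2} := by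
  have : Fact p.Prime := ⟨hp⟩
  have hn0 : n ≠ 0 := by omega
  have hcard := card_mul_card_units_mul_two_le_card_diagonal_quadric _ _ _
    (ZMod.exists_quadric_root_ne_neg hodd hn0 h1 h2 h3 hres)
  rw [Nat.card_zmod, Nat.card_eq_fintype_card (α := (ZMod (p ^ n))ˣ),
    ZMod.card_units_eq_totient] at hcard
  rw [hp.two_mul_one_sub_one_div_mul_pow_eq_totient hn0]
  exact_mod_cast hcard
end

section
/- Let q(x) = a_1*x_1^2 + a_2*x_2^2 + a_3*x_3^2 be an integral quadratic form and let p be an odd prime dividing a_1 but not a_2 and not a_3. Then for every n ≥ 1 the number of solutions modulo p^n of q(x) ≡ 0 (mod p^n) with p ∤ x_3 is at least (1 + legendreSym p (-a_2*a_3)) * (1 - 1/p) * p^{2n}. -/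
/-- Hensel lifting for square roots of units modulo odd prime powers. -/
lemma sq_lift (p : ℕ) (hp : p.Prime) (hodd : p ≠ 2) (c : ℤ) (hc : ¬(p:ℤ) ∣ c)
    (h : ∃ x : ℤ, (p:ℤ) ∣ x^2 - c) : ∀ n : ℕ, 1 ≤ n → ∃ x : ℤ, ((p:ℤ))^n ∣ x^2 - c := by
  haveI := Fact.mk hp
  have pInt : Prime (p:ℤ) := Nat.prime_iff_prime_int.1 hp
  have hp2 : ¬ (p:ℤ) ∣ 2 := by
    intro hd
    have h1 : (p:ℤ) ≤ 2 := Int.le_of_dvd (by norm_num) hd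
    have h2 : 2 ≤ p := hp.two_le
    have : p = 2 := by exact_mod_cast le_antisymm (by exact_mod_cast h1) h2
    exact hodd this
  intro n hn
  induction n with
  | zero => omega
  | succ m ih =>
    rcases Nat.lt_or_ge m 1 with hm | hm
    · interval_cases m
      simpa using h
    · obtain ⟨x, hx⟩ := ih hm
      obtain ⟨k, hk⟩ := hx
      have hpm : (p:ℤ) ∣ x^2 - c := dvd_trans (dvd_pow_self _ (by omega : m ≠ 0)) ⟨k, hk⟩
      have hpx : ¬ (p:ℤ) ∣ x := by
        intro hd
        exact hc (by
          have h1 : (p:ℤ) ∣ x^2 := by rw [sq]; exact hd.mul_right x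
          have := dvd_sub h1 hpm
          simpa using this)
      have h2x : ((2*x : ℤ) : ZMod p) ≠ 0 := by
        rw [Ne, ZMod.intCast_zmod_eq_zero_iff_dvd]
        intro hd
        rcases pInt.dvd_mul.mp hd with h' | h'
        · exact hp2 h'
        · exact hpx h'
      obtain ⟨w, hw⟩ := (Ne.isUnit h2x).exists_right_inv
      set z : ZMod p := -(k : ZMod p) * w with hz
      set t : ℤ := (z.val : ℤ) with ht
      have hzt : ((t : ℤ) : ZMod p) = z := by
        simp [ht, ZMod.natCast_val, ZMod.cast_id]
      have hdvd1 : (p:ℤ) ∣ 2*x*t + k := by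
        rw [← ZMod.intCast_zmod_eq_zero_iff_dvd]
        have e1 : ((2*x*t + k : ℤ) : ZMod p)
            = ((2*x : ℤ) : ZMod p) * ((t : ℤ) : ZMod p) + (k : ZMod p) := by
          push_cast; ring
        rw [e1, hzt, hz, show ((2*x:ℤ):ZMod p) * (-(k:ZMod p) * w)
            = -(k:ZMod p) * (((2*x:ℤ):ZMod p) * w) from by ring, hw]
        ring
      refine ⟨x + t * p^m, ?_⟩
      have key : (x + t * (p:ℤ)^m)^2 - c
          = (p:ℤ)^m * (k + 2*x*t) + t^2 * ((p:ℤ)^m)^2 := by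
        have hc' : c = x^2 - (p:ℤ)^m * k := by linarith
        rw [hc']; ring
      rw [key]
      apply dvd_add
      · rw [pow_succ]
        exact mul_dvd_mul_left _ (by
          rcases hdvd1 with ⟨w, hw⟩
          exact ⟨w, by linarith⟩)
      · have : ((p:ℤ))^(m+1) ∣ ((p:ℤ)^m)^2 := by
          rw [← pow_mul]
          exact pow_dvd_pow _ (by omega)
        exact Dvd.dvd.mul_left this _

lemma solve_aux (a₁ a₂ a₃ : ℤ) (p : ℕ) (hp : p.Prime) (hodd : p ≠ 2)
    (h1 : (p:ℤ) ∣ a₁) (h2 : ¬(p:ℤ) ∣ a₂) (h3 : ¬(p:ℤ) ∣ a₃)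
    (hleg : ∃ y : ℤ, (p:ℤ) ∣ y^2 + a₂*a₃)
    (n : ℕ) (hn : 1 ≤ n) (X U : ℤ) (hU : ¬(p:ℤ) ∣ U) :
    ∃ y : ℤ, ((p:ℤ)^n ∣ a₁*X^2 + a₂*y^2 + a₃*U^2) ∧ ¬(p:ℤ) ∣ y := by
  have pInt : Prime (p:ℤ) := Nat.prime_iff_prime_int.1 hp
  have hcop : IsCoprime ((p:ℤ)^n) a₂ := IsCoprime.pow_left (pInt.coprime_iff_not_dvd.2 h2)
  obtain ⟨s, b, hst⟩ := hcop
  have hb : (p:ℤ)^n ∣ a₂*b - 1 := ⟨-s, by linarith⟩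
  have hb1 : (p:ℤ) ∣ a₂*b - 1 := dvd_trans (dvd_pow_self _ (by omega : n ≠ 0)) hb
  have hpb : ¬ (p:ℤ) ∣ b := by
    intro hd
    have : (p:ℤ) ∣ 1 := by
      have h' : (p:ℤ) ∣ a₂*b := hd.mul_left a₂
      have := dvd_sub h' hb1
      simpa using this
    have := Int.le_of_dvd one_pos this
    have := hp.two_le
    omega
  have hpc : ¬ (p:ℤ) ∣ (-(a₁*X^2 + a₃*U^2)) * b := by
    intro hd
    rcases pInt.dvd_mul.mp hd with h' | h'
    · rw [dvd_neg] at h'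
      have ha1 : (p:ℤ) ∣ a₁*X^2 := h1.mul_right _
      have h'' : (p:ℤ) ∣ a₃*U^2 := by
        have := dvd_sub h' ha1
        simpa using this
      rcases pInt.dvd_mul.mp h'' with h3' | h3'
      · exact h3 h3'
      · exact hU (pInt.dvd_of_dvd_pow h3')
    · exact hpb h'
  have hsq : ∃ x : ℤ, (p:ℤ) ∣ x^2 - (-(a₁*X^2 + a₃*U^2)) * b := by
    obtain ⟨y0, e, he⟩ := hleg
    obtain ⟨f, hf⟩ := hb1
    obtain ⟨g, hg⟩ := h1
    refine ⟨y0*U*b, e*U^2*b^2 - a₃*U^2*b*f + g*X^2*b, ?_⟩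
    linear_combination (U^2*b^2)*he - (a₃*U^2*b)*hf + (X^2*b)*hg
  obtain ⟨y, hy⟩ := sq_lift p hp hodd _ hpc hsq n hn
  have hpy : ¬ (p:ℤ) ∣ y := by
    intro hd
    apply hpc
    have h' : (p:ℤ) ∣ y^2 := by rw [sq]; exact hd.mul_right y
    have h'' := dvd_trans (dvd_pow_self ((p:ℤ)) (by omega : n ≠ 0)) hy
    have := dvd_sub h' h''
    simpa using this
  refine ⟨y, ?_, hpy⟩
  obtain ⟨q, hq⟩ := hy
  obtain ⟨r, hr⟩ := hb
  exact ⟨a₂*q + (-(a₁*X^2 + a₃*U^2))*r, by linear_combination a₂*hq + (-(a₁*X^2 + a₃*U^2))*hr⟩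

theorem stmt_2 (a₁ a₂ a₃ : ℤ) (p : ℕ) [Fact p.Prime] (hodd : p ≠ 2)
    (h1 : (p : ℤ) ∣ a₁) (h2 : ¬ (p : ℤ) ∣ a₂) (h3 : ¬ (p : ℤ) ∣ a₃)
    (n : ℕ) (hn : 1 ≤ n) :
    ((1 + legendreSym p (-a₂ * a₃) : ℝ)) * (1 - 1 / p) * (p : ℝ) ^ (2 * n) ≤
      Nat.card {x : ZMod (p ^ n) × ZMod (p ^ n) × ZMod (p ^ n) //
        (a₁ : ZMod (p ^ n)) * x.1 ^ 2 + a₂ * x.2.1 ^ 2 + a₃ * x.2.2 ^ 2 = 0 ∧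
          IsUnit x.2.2} := by
  have hp : p.Prime := Fact.out
  have pInt : Prime (p:ℤ) := Nat.prime_iff_prime_int.1 hp
  haveI : NeZero (p^n) := ⟨pow_ne_zero n hp.pos.ne'⟩
  have hA : ((-a₂*a₃ : ℤ) : ZMod p) ≠ 0 := by
    rw [Ne, ZMod.intCast_zmod_eq_zero_iff_dvd]
    intro hd
    rcases pInt.dvd_mul.mp hd with h' | h'
    · exact h2 (dvd_neg.mp h')
    · exact h3 h'
  rcases legendreSym.eq_one_or_neg_one p hA with hleg | hleg
  · -- legendre = 1 : the main case
    have hsq : ∃ y : ℤ, (p:ℤ) ∣ y^2 + a₂*a₃ := by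
      obtain ⟨z, hz⟩ := (legendreSym.eq_one_iff p hA).mp hleg
      refine ⟨(z.val : ℤ), ?_⟩
      rw [← ZMod.intCast_zmod_eq_zero_iff_dvd]
      push_cast
      rw [show ((z.val : ℕ) : ZMod p) = z from ZMod.natCast_rightInverse z]
      push_cast at hz
      linear_combination -hz
    have key : ∀ (x₁ : ZMod (p^n)) (u : (ZMod (p^n))ˣ), ∃ y : ℤ,
        ((p:ℤ)^n ∣ a₁*(x₁.val:ℤ)^2 + a₂*y^2 + a₃*(((u:ZMod (p^n))).val:ℤ)^2)
          ∧ ¬(p:ℤ) ∣ y := by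
      intro x₁ u
      apply solve_aux a₁ a₂ a₃ p hp hodd h1 h2 h3 hsq n hn
      have hIU : IsUnit ((((u : ZMod (p^n)).val : ℕ)) : ZMod (p^n)) := by
        rw [show ((((u : ZMod (p^n)).val : ℕ)) : ZMod (p^n)) = (u : ZMod (p^n)) from
          ZMod.natCast_rightInverse _]
        exact u.isUnit
      have hco := (ZMod.isUnit_iff_coprime _ (p^n)).1 hIU
      intro hd
      have hd' : p ∣ (u : ZMod (p^n)).val := Int.ofNat_dvd.mp hd
      have hdN : p ∣ p^n := dvd_pow_self p (by omega)
      have hg1 : p ∣ Nat.gcd ((u : ZMod (p^n)).val) (p^n) := Nat.dvd_gcd hd' hdN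
      rw [Nat.Coprime] at hco
      rw [hco] at hg1
      have := Nat.le_of_dvd one_pos hg1
      have := hp.two_le
      omega
    choose Y hY hYu using key
    have hp2 : ¬ (p:ℤ) ∣ 2 := by
      intro hd
      have h1' : (p:ℤ) ≤ 2 := Int.le_of_dvd (by norm_num) hd
      have h1'' : p ≤ 2 := by exact_mod_cast h1'
      have h2' : 2 ≤ p := hp.two_le
      exact hodd (le_antisymm h1'' h2')
    let S := {x : ZMod (p^n) × ZMod (p^n) × ZMod (p^n) //
        (a₁ : ZMod (p^n)) * x.1 ^ 2 + a₂ * x.2.1 ^ 2 + a₃ * x.2.2 ^ 2 = 0 ∧ IsUnit x.2.2}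
    let f : ZMod (p^n) × (ZMod (p^n))ˣ × Bool → S := fun w =>
      ⟨(w.1, (((if w.2.2 then Y w.1 w.2.1 else -(Y w.1 w.2.1)) : ℤ) : ZMod (p^n)),
          (w.2.1 : ZMod (p^n))), by
        refine ⟨?_, (w.2.1).isUnit⟩
        have hdvd : ((p^n : ℕ) : ℤ) ∣ a₁*((w.1).val:ℤ)^2 + a₂*(Y w.1 w.2.1)^2
            + a₃*(((w.2.1 : ZMod (p^n))).val:ℤ)^2 := by
          exact_mod_cast hY w.1 w.2.1
        have h0 : ((a₁*((w.1).val:ℤ)^2 + a₂*(Y w.1 w.2.1)^2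
            + a₃*(((w.2.1 : ZMod (p^n))).val:ℤ)^2 : ℤ) : ZMod (p^n)) = 0 :=
          (ZMod.intCast_zmod_eq_zero_iff_dvd _ _).2 hdvd
        push_cast at h0
        simp only [ZMod.natCast_val, ZMod.cast_id] at h0
        show (a₁ : ZMod (p^n)) * w.1^2
            + a₂ * (((if w.2.2 then Y w.1 w.2.1 else -(Y w.1 w.2.1)) : ℤ) : ZMod (p^n))^2
            + a₃ * ((w.2.1 : ZMod (p^n)))^2 = 0
        cases hb : w.2.2 <;>
          simp only [hb, if_true, if_false, Bool.false_eq_true, Int.cast_neg, neg_sq] <;>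
          exact h0⟩
    have hf : Function.Injective f := by
      rintro ⟨x₁, u, b⟩ ⟨x₁', u', b'⟩ hEq
      have hEq' := Subtype.ext_iff.mp hEq
      have e1 : x₁ = x₁' := congrArg (fun s => s.1) hEq'
      have e3 : (u : ZMod (p^n)) = (u' : ZMod (p^n)) := congrArg (fun s => s.2.2) hEq'
      have e3' : u = u' := Units.ext e3
      have e2 : (((if b then Y x₁ u else -(Y x₁ u)) : ℤ) : ZMod (p^n))
          = (((if b' then Y x₁' u' else -(Y x₁' u')) : ℤ) : ZMod (p^n)) :=
        congrArg (fun s => s.2.1) hEq'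
      subst e1; subst e3'
      suffices hbb : b = b' by rw [hbb]
      by_contra hbb
      have e2' : ((Y x₁ u : ℤ) : ZMod (p^n)) = ((-(Y x₁ u) : ℤ) : ZMod (p^n)) := by
        cases b <;> cases b' <;>
          simp only [Bool.false_eq_true, if_true, if_false, ite_true, ite_false] at e2 <;>
          first
            | exact absurd rfl hbb
            | exact e2
            | exact e2.symm
      have hY2 : ((Y x₁ u - -(Y x₁ u) : ℤ) : ZMod (p^n)) = 0 := by
        rw [Int.cast_sub, ← e2', sub_self]
      have hdvd : (p:ℤ) ∣ 2 * Y x₁ u := by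
        have h' := (ZMod.intCast_zmod_eq_zero_iff_dvd _ _).1 hY2
        rw [show (Y x₁ u - -(Y x₁ u) : ℤ) = 2 * Y x₁ u from by ring] at h'
        have hdN : ((p:ℤ)) ∣ ((p^n : ℕ) : ℤ) := by
          push_cast
          exact dvd_pow_self _ (by omega)
        exact dvd_trans hdN h'
      rcases pInt.dvd_mul.mp hdvd with h' | h'
      · exact hp2 h'
      · exact hYu x₁ u h'
    have hcard : Nat.card (ZMod (p^n) × (ZMod (p^n))ˣ × Bool) ≤ Nat.card S :=
      Nat.card_le_card_of_injective f hf
    have hdom : Nat.card (ZMod (p^n) × (ZMod (p^n))ˣ × Bool)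
        = p^n * ((p^(n-1) * (p-1)) * 2) := by
      rw [Nat.card_prod, Nat.card_prod, Nat.card_zmod,
        Nat.card_eq_fintype_card (α := (ZMod (p^n))ˣ), ZMod.card_units_eq_totient,
        Nat.totient_prime_pow hp (by omega : 0 < n),
        Nat.card_eq_fintype_card (α := Bool), Fintype.card_bool]
    rw [hleg]
    rw [hdom] at hcard
    have hfinal : ((p^n * ((p^(n-1) * (p-1)) * 2) : ℕ) : ℝ) ≤ (Nat.card S : ℝ) := by
      exact_mod_cast hcard
    refine le_trans (le_of_eq ?_) hfinal
    · 
          have hp0 : (0:ℝ) < p := by exact_mod_cast hp.pos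
          have hpow : (p:ℝ)^(2*n) = (p:ℝ)^n * ((p:ℝ)^(n-1) * (p:ℝ)) := by
            rw [← pow_succ, ← pow_add]
            congr 1
            omega
          have hcast : ((p - 1 : ℕ) : ℝ) = (p:ℝ) - 1 := by
            push_cast [Nat.cast_sub hp.one_le]
            ring
          push_cast [hcast]
          rw [hpow]
          field_simp
          ring
  · -- legendre = -1 : trivial bound
    rw [hleg]
    norm_num
end

section
/- Let x = (x_0, x_1, x_2, x_3) be a point on the surface x_0(x_0^2+3x_1^2) = x_2(x_2^2+3x_3^2). Then x lies on one of the three lines {x_0 = x_2 = 0}, {x_0 - x_2 = x_1 - x_3 = 0}, {x_0 - x_2 = x_1 + x_3 = 0} if and only if x_0 * x_2 * (x_2 - x_0) = 0. -/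
theorem stmt_9 (x₀ x₁ x₂ x₃ : ℚ)
    (hsurf : x₀ * (x₀ ^ 2 + 3 * x₁ ^ 2) = x₂ * (x₂ ^ 2 + 3 * x₃ ^ 2)) :
    ((x₀ = 0 ∧ x₂ = 0) ∨ (x₀ - x₂ = 0 ∧ x₁ - x₃ = 0) ∨
        (x₀ - x₂ = 0 ∧ x₁ + x₃ = 0)) ↔ x₀ * x₂ * (x₂ - x₀) = 0 := by
  constructor
  · rintro (⟨h0, h2⟩ | ⟨h, _⟩ | ⟨h, _⟩)
    · simp [h0, h2]
    · have : x₂ - x₀ = 0 := by linarith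
      simp [this]
    · have : x₂ - x₀ = 0 := by linarith
      simp [this]
  · intro h
    rcases mul_eq_zero.mp h with h | h
    · rcases mul_eq_zero.mp h with h | h
      · -- x₀ = 0
        subst h
        have h2 : x₂ = 0 := by
          rcases mul_eq_zero.mp (by linarith : x₂ * (x₂ ^ 2 + 3 * x₃ ^ 2) = 0) with h2 | h2
          · exact h2
          · nlinarith [sq_nonneg x₂, sq_nonneg x₃]
        exact Or.inl ⟨rfl, h2⟩
      · -- x₂ = 0
        subst h
        have h0 : x₀ = 0 := by
          rcases mul_eq_zero.mp (by linarith : x₀ * (x₀ ^ 2 + 3 * x₁ ^ 2) = 0) with h0 | h0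
          · exact h0
          · nlinarith [sq_nonneg x₀, sq_nonneg x₁]
        exact Or.inl ⟨h0, rfl⟩
    · -- x₂ = x₀
      have h02 : x₂ = x₀ := by linarith [sub_eq_zero.mp h]
      subst h02
      have key : x₂ * (x₁ - x₃) * (x₁ + x₃) = 0 := by nlinarith
      rcases mul_eq_zero.mp key with hk | hk
      · rcases mul_eq_zero.mp hk with hk | hk
        · exact Or.inl ⟨hk, hk⟩
        · exact Or.inr (Or.inl ⟨sub_self _, hk⟩)
      · exact Or.inr (Or.inr ⟨sub_self _, hk⟩)
end

section
/- Let t = (t_0,t_1,t_2,t_3) be a primitive integer vector with T := |t_0 t_1 t_2 t_3| ≠ 0, and let Y'_t denote the rational points y = [y_0:y_1:y_2:y_3] of the cubic surface t_0^3 y_0^3 + t_1^3 y_1^3 + t_2^3 y_2^3 + t_3^3 y_3^3 = 0 which do not lie on any of its lines. For B ≥ T, the number of points of Y'_t of anticanonical height at most B is at least N(B/T), where N denotes the counting function of primitive integer points on the Fermat cubic x_0^3+...+x_3^3=0 off its lines with supremum norm at most B/T. -/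
open Finset

/-- The number of primitive integer points of supremum norm at most `B` on the
Fermat cubic surface, away from its three rational lines. -/
noncomputable def fermatCount (B : ℝ) : ℕ :=
  Nat.card {x : Fin 4 → ℤ //
    Finset.gcd Finset.univ x = 1 ∧
    x 0 ^ 3 + x 1 ^ 3 + x 2 ^ 3 + x 3 ^ 3 = 0 ∧
    ¬ ((x 0 + x 1 = 0 ∧ x 2 + x 3 = 0) ∨
       (x 0 + x 2 = 0 ∧ x 1 + x 3 = 0) ∨
       (x 0 + x 3 = 0 ∧ x 1 + x 2 = 0)) ∧
    ∀ i, (|x i| : ℝ) ≤ B}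

/-- `y` lies on a (projective) line contained in the cubic surface
`∑ tᵢ³ yᵢ³ = 0`: there are two linearly independent rational vectors `u, v`
spanning a plane through the origin all of whose points satisfy the cubic
equation, with `y` in their span. -/
def OnALine (t : Fin 4 → ℤ) (y : Fin 4 → ℤ) : Prop :=
  ∃ u v : Fin 4 → ℚ, LinearIndependent ℚ ![u, v] ∧
    (∀ a b : ℚ, ∑ i, ((t i : ℚ)) ^ 3 * (a * u i + b * v i) ^ 3 = 0) ∧
    ∃ a b : ℚ, ∀ i, (y i : ℚ) = a * u i + b * v i

/-- The number of primitive integer points of anticanonical height at most `B`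
on the cubic surface `∑ tᵢ³ yᵢ³ = 0`, lying on none of its lines. -/
noncomputable def heightCount (t : Fin 4 → ℤ) (B : ℝ) : ℕ :=
  Nat.card {y : Fin 4 → ℤ //
    Finset.gcd Finset.univ y = 1 ∧
    (t 0) ^ 3 * y 0 ^ 3 + (t 1) ^ 3 * y 1 ^ 3 + (t 2) ^ 3 * y 2 ^ 3 +
      (t 3) ^ 3 * y 3 ^ 3 = 0 ∧
    ¬ OnALine t y ∧
    ∀ i, (|y i| : ℝ) ≤ B}


lemma pairing_aux (z : Fin 4 → ℚ) (i j k l : Fin 4)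
    (h : ({i, j, k, l} : Finset (Fin 4)) = Finset.univ)
    (h1 : z i + z j = 0) (h2 : z k + z l = 0) :
    (z 0 + z 1 = 0 ∧ z 2 + z 3 = 0) ∨ (z 0 + z 2 = 0 ∧ z 1 + z 3 = 0) ∨
      (z 0 + z 3 = 0 ∧ z 1 + z 2 = 0) := by
  fin_cases i <;> fin_cases j <;> fin_cases k <;> fin_cases l <;>
    simp only [Fin.zero_eta, Fin.mk_one, Fin.reduceFinMk, Fin.isValue] at h h1 h2 <;>
    first
      | exact absurd h (by decide)
      | (left; constructor <;> linarith)
      | (right; left; constructor <;> linarith)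
      | (right; right; constructor <;> linarith)

lemma sum_four (g : Fin 4 → ℚ) (i j k l : Fin 4)
    (h : ({i, j, k, l} : Finset (Fin 4)) = Finset.univ) :
    ∑ m, g m = g i + g j + g k + g l := by
  fin_cases i <;> fin_cases j <;> fin_cases k <;> fin_cases l <;>
    simp only [Fin.zero_eta, Fin.mk_one, Fin.reduceFinMk, Fin.isValue] at h ⊢ <;>
    first
      | exact absurd h (by decide)
      | (rw [Fin.sum_univ_four] <;> ring)


lemma rat_cube_eq_neg_one {x : ℚ} (hx : x ^ 3 = -1) : x = -1 := by
  have h2 : (x + 1) * (x ^ 2 - x + 1) = 0 := by linear_combination hx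
  rcases mul_eq_zero.mp h2 with h | h
  · linarith
  · nlinarith [sq_nonneg (2 * x - 1)]

lemma fermat_line_classify (u v : Fin 4 → ℚ)
    (hind : LinearIndependent ℚ ![u, v])
    (hc : ∀ a b : ℚ, ∑ m, (a * u m + b * v m) ^ 3 = 0)
    (a b : ℚ) (z : Fin 4 → ℚ) (hz : ∀ m, z m = a * u m + b * v m) :
    (z 0 + z 1 = 0 ∧ z 2 + z 3 = 0) ∨ (z 0 + z 2 = 0 ∧ z 1 + z 3 = 0) ∨
      (z 0 + z 3 = 0 ∧ z 1 + z 2 = 0) := by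
  rw [LinearIndependent.pair_iff] at hind
  have hminor : ∃ i j : Fin 4, u i * v j - u j * v i ≠ 0 := by
    by_contra hcon
    push_neg at hcon
    rcases eq_or_ne u 0 with hu | hu
    · have := (hind 1 0 (by simp [hu])).1
      norm_num at this
    · obtain ⟨s, hs⟩ := Function.ne_iff.mp hu
      have h0 : v s • u + (-u s) • v = 0 := by
        funext m
        have hm := hcon m s
        simp only [Pi.add_apply, Pi.smul_apply, smul_eq_mul, Pi.zero_apply]
        have hms := hcon m s
        nlinarith [hcon m s]
      have := (hind (v s) (-u s) h0).2
      exact hs (by simpa using this)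
  obtain ⟨i, j, hΔ⟩ := hminor
  have hij : i ≠ j := by
    rintro rfl
    exact hΔ (by ring)
  have hkl : ∀ i' j' : Fin 4, i' ≠ j' → ∃ k l : Fin 4,
      ({i', j', k, l} : Finset (Fin 4)) = Finset.univ := by decide
  obtain ⟨k, l, hset⟩ := hkl i j hij
  set Δ : ℚ := u i * v j - u j * v i with hΔdef
  set p : Fin 4 → ℚ := fun m => (v j * u m - u j * v m) / Δ with hp
  set q : Fin 4 → ℚ := fun m => (u i * v m - v i * u m) / Δ with hq
  have hpi : p i = 1 := by
    show (v j * u i - u j * v i) / Δ = 1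
    rw [div_eq_one_iff_eq hΔ]; ring
  have hpj : p j = 0 := by
    show (v j * u j - u j * v j) / Δ = 0
    rw [show v j * u j - u j * v j = 0 by ring, zero_div]
  have hqi : q i = 0 := by
    show (u i * v i - v i * u i) / Δ = 0
    rw [show u i * v i - v i * u i = 0 by ring, zero_div]
  have hqj : q j = 1 := by
    show (u i * v j - v i * u j) / Δ = 1
    rw [div_eq_one_iff_eq hΔ]; ring
  have hcpq : ∀ A B : ℚ, ∑ m, (A * p m + B * q m) ^ 3 = 0 := by
    intro A B
    have h := hc ((A * v j - B * v i) / Δ) ((B * u i - A * u j) / Δ)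
    rw [← h]
    refine Finset.sum_congr rfl fun m _ => ?_
    rw [hp, hq]
    field_simp
    ring
  -- coefficient identities
  have key : ∀ A B : ℚ,
      A ^ 3 * (∑ m, p m ^ 3) + 3 * A ^ 2 * B * (∑ m, p m ^ 2 * q m)
        + 3 * A * B ^ 2 * (∑ m, p m * q m ^ 2) + B ^ 3 * (∑ m, q m ^ 3) = 0 := by
    intro A B
    rw [← hcpq A B, Finset.mul_sum, Finset.mul_sum, Finset.mul_sum, Finset.mul_sum,
      ← Finset.sum_add_distrib, ← Finset.sum_add_distrib, ← Finset.sum_add_distrib]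
    exact Finset.sum_congr rfl fun m _ => by ring
  have k10 := key 1 0
  have k01 := key 0 1
  have k11 := key 1 1
  have k1m := key 1 (-1)
  have e30 : (∑ m, p m ^ 3) = 0 := by linarith
  have e03 : (∑ m, q m ^ 3) = 0 := by linarith
  have e21 : (∑ m, p m ^ 2 * q m) = 0 := by linarith
  have e12 : (∑ m, p m * q m ^ 2) = 0 := by linarith
  rw [sum_four _ i j k l hset, hpi, hpj] at e30
  rw [sum_four _ i j k l hset, hqi, hqj] at e03
  rw [sum_four _ i j k l hset, hpi, hpj, hqi, hqj] at e21
  rw [sum_four _ i j k l hset, hpi, hpj, hqi, hqj] at e12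
  have E1 : 1 + p k ^ 3 + p l ^ 3 = 0 := by linear_combination e30
  have E4 : 1 + q k ^ 3 + q l ^ 3 = 0 := by linear_combination e03
  have E2 : p k ^ 2 * q k + p l ^ 2 * q l = 0 := by linear_combination e21
  have E3 : p k * q k ^ 2 + p l * q l ^ 2 = 0 := by linear_combination e12
  -- express z through p, q
  have hupq : ∀ m, u m = u i * p m + u j * q m := by
    intro m; rw [hp, hq]; field_simp; ring
  have hvpq : ∀ m, v m = v i * p m + v j * q m := by
    intro m; rw [hp, hq]; field_simp; ring
  have hzpq : ∀ m, z m = (a * u i + b * v i) * p m + (a * u j + b * v j) * q m := by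
    intro m; rw [hz m, hupq m, hvpq m]; ring
  by_cases hc0 : p k = 0
  · have hd : p l = -1 := rat_cube_eq_neg_one (by rw [hc0] at E1; linarith)
    have hf : q l = 0 := by
      rw [hc0, hd] at E2; linear_combination E2
    have he : q k = -1 := rat_cube_eq_neg_one (by rw [hf] at E4; linarith)
    refine pairing_aux z i l j k ?_ ?_ ?_
    · rw [← hset]; ext x; simp; tauto
    · rw [hzpq i, hzpq l, hpi, hd, hqi, hf]; ring
    · rw [hzpq j, hzpq k, hpj, hc0, hqj, he]; ring
  · by_cases he0 : q k = 0
    · have hf : q l = -1 := rat_cube_eq_neg_one (by rw [he0] at E4; linarith)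
      have hd : p l = 0 := by
        rw [he0, hf] at E3; linear_combination E3
      have hcc : p k = -1 := rat_cube_eq_neg_one (by rw [hd] at E1; linarith)
      refine pairing_aux z i k j l ?_ ?_ ?_
      · rw [← hset]; ext x; simp; tauto
      · rw [hzpq i, hzpq k, hpi, hcc, hqi, he0]; ring
      · rw [hzpq j, hzpq l, hpj, hd, hqj, hf]; ring
    · exfalso
      by_cases hd0 : p l = 0
      · rw [hd0] at E3
        have : p k * q k ^ 2 = 0 := by linarith
        rcases mul_eq_zero.mp this with h | h
        · exact hc0 h
        · exact he0 (pow_eq_zero_iff (by norm_num)|>.mp h)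
      · by_cases hf0 : q l = 0
        · rw [hf0] at E2
          have : p k ^ 2 * q k = 0 := by linarith
          rcases mul_eq_zero.mp this with h | h
          · exact hc0 (pow_eq_zero_iff (by norm_num)|>.mp h)
          · exact he0 h
        · have h1 : (p k * q k) ^ 3 = (p l * q l) ^ 3 := by
            linear_combination (p k * q k ^ 2) * E2 - (p l ^ 2 * q l) * E3
          have h2 : p k * q k = p l * q l :=
            (Odd.strictMono_pow (R := ℚ) (by decide : Odd 3)).injective h1
          have h3 : p l ^ 2 * q l * (q l + q k) = 0 := by
            linear_combination q k * E2 - (p k * q k + p l * q l) * h2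
          have hfe : q l = -q k := by
            rcases mul_eq_zero.mp h3 with h | h
            · rcases mul_eq_zero.mp h with h' | h'
              · exact absurd (pow_eq_zero_iff (by norm_num)|>.mp h') hd0
              · exact absurd h' hf0
            · linarith
          have hcd : p k = -p l := by
            have h4 : q k * (p k + p l) = 0 := by
              linear_combination h2 + p l * hfe
            rcases mul_eq_zero.mp h4 with h | h
            · exact absurd h he0
            · linarith
          rw [hcd] at E1
          have : (1 : ℚ) = 0 := by linear_combination E1
          exact one_ne_zero this


lemma gcd_nonneg' (w : Fin 4 → ℤ) : 0 ≤ Finset.gcd Finset.univ w := by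
  have h := Finset.normalize_gcd (s := (Finset.univ : Finset (Fin 4))) (f := w)
  rw [← Int.abs_eq_normalize] at h
  rw [← h]; exact abs_nonneg _

/-- The auxiliary integer vector `wᵢ = zᵢ ∏_{j ≠ i} tⱼ`. -/
def wvec (t z : Fin 4 → ℤ) : Fin 4 → ℤ :=
  ![z 0 * (t 1 * t 2 * t 3), z 1 * (t 0 * t 2 * t 3),
    z 2 * (t 0 * t 1 * t 3), z 3 * (t 0 * t 1 * t 2)]

/-- The image point: `wvec` divided by its gcd. -/
def yfun (t z : Fin 4 → ℤ) : Fin 4 → ℤ :=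
  fun i => wvec t z i / Finset.gcd Finset.univ (wvec t z)

lemma wvec_mul (t z : Fin 4 → ℤ) (i : Fin 4) :
    t i * wvec t z i = (t 0 * t 1 * t 2 * t 3) * z i := by
  fin_cases i <;>
    simp only [wvec, Fin.zero_eta, Fin.mk_one, Fin.reduceFinMk, Fin.isValue,
      Matrix.cons_val_zero, Matrix.cons_val_one, Matrix.head_cons,
      Matrix.cons_val_two, Matrix.tail_cons, Matrix.cons_val_three] <;> ring

lemma gcd_div_self (x : Fin 4 → ℤ) (hx : Finset.gcd Finset.univ x ≠ 0) :
    (∀ i, Finset.gcd Finset.univ x * (x i / Finset.gcd Finset.univ x) = x i) ∧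
      Finset.gcd Finset.univ (fun i => x i / Finset.gcd Finset.univ x) = 1 := by
  have hdvd : ∀ i, Finset.gcd Finset.univ x * (x i / Finset.gcd Finset.univ x) = x i :=
    fun i => Int.mul_ediv_cancel' (Finset.gcd_dvd (Finset.mem_univ i))
  refine ⟨hdvd, ?_⟩
  have h1 : Finset.gcd Finset.univ
        (fun i => Finset.gcd Finset.univ x * (x i / Finset.gcd Finset.univ x)) =
      normalize (Finset.gcd Finset.univ x) *
        Finset.gcd Finset.univ (fun i => x i / Finset.gcd Finset.univ x) :=
    Finset.gcd_mul_left
  rw [show (fun i => Finset.gcd Finset.univ x * (x i / Finset.gcd Finset.univ x)) = x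
      from funext hdvd, Int.normalize_of_nonneg (gcd_nonneg' x)] at h1
  have h2 : Finset.gcd Finset.univ x * 1 = Finset.gcd Finset.univ x *
      Finset.gcd Finset.univ (fun i => x i / Finset.gcd Finset.univ x) := by
    rw [mul_one, ← h1]
  exact (mul_left_cancel₀ hx h2).symm

lemma finite_pred (P : (Fin 4 → ℤ) → Prop) (B : ℝ) (h : ∀ y, P y → ∀ i, (|y i| : ℝ) ≤ B) :
    Finite {y : Fin 4 → ℤ // P y} := by
  have hs : ({y : Fin 4 → ℤ | P y}).Finite := by
    apply Set.Finite.subset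
      (Set.Finite.pi (t := fun _ : Fin 4 => Set.Icc (-⌈B⌉) ⌈B⌉) fun _ => Set.finite_Icc _ _)
    intro y hy
    simp only [Set.mem_pi, Set.mem_univ, Set.mem_Icc, true_implies]
    intro i
    have h1 : (|y i| : ℝ) ≤ (⌈B⌉ : ℝ) := (h y hy i).trans (Int.le_ceil B)
    have h2 : |y i| ≤ ⌈B⌉ := by exact_mod_cast h1
    rw [abs_le] at h2; exact h2
  exact hs.to_subtype

section Main

variable (t : Fin 4 → ℤ) (T : ℤ)

lemma main_map (hT : T = |t 0 * t 1 * t 2 * t 3|) (hT0 : T ≠ 0)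
    (B : ℝ) (hB : (T : ℝ) ≤ B) (z : Fin 4 → ℤ)
    (h1 : Finset.gcd Finset.univ z = 1)
    (h2 : z 0 ^ 3 + z 1 ^ 3 + z 2 ^ 3 + z 3 ^ 3 = 0)
    (h3 : ¬ ((z 0 + z 1 = 0 ∧ z 2 + z 3 = 0) ∨
        (z 0 + z 2 = 0 ∧ z 1 + z 3 = 0) ∨
        (z 0 + z 3 = 0 ∧ z 1 + z 2 = 0)))
    (h4 : ∀ i, (|z i| : ℝ) ≤ B / T) :
    Finset.gcd Finset.univ (yfun t z) = 1 ∧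
      (t 0) ^ 3 * yfun t z 0 ^ 3 + (t 1) ^ 3 * yfun t z 1 ^ 3 +
        (t 2) ^ 3 * yfun t z 2 ^ 3 + (t 3) ^ 3 * yfun t z 3 ^ 3 = 0 ∧
      ¬ OnALine t (yfun t z) ∧
      ∀ i, (|yfun t z i| : ℝ) ≤ B := by
  classical
  have ht : ∀ i : Fin 4, t i ≠ 0 := by
    intro i h0
    apply hT0
    rw [hT, abs_eq_zero]
    fin_cases i <;>
      simp only [Fin.zero_eta, Fin.mk_one, Fin.reduceFinMk, Fin.isValue] at h0 <;>
      rw [h0] <;> ring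
  set P : ℤ := t 0 * t 1 * t 2 * t 3 with hPdef
  have hP0 : P ≠ 0 :=
    mul_ne_zero (mul_ne_zero (mul_ne_zero (ht 0) (ht 1)) (ht 2)) (ht 3)
  have hPT : |P| = T := hT.symm
  have hT1 : (1 : ℤ) ≤ T := by
    have h0 : 0 ≤ T := by rw [hT]; exact abs_nonneg _
    omega
  have hTR : (0 : ℝ) < (T : ℝ) := by exact_mod_cast hT1
  set g : ℤ := Finset.gcd Finset.univ (wvec t z) with hgdef
  have hg0 : g ≠ 0 := by
    rw [hgdef, Ne, Finset.gcd_eq_zero_iff]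
    intro hall
    have hz0 : ∀ i, z i = 0 := by
      intro i
      have := wvec_mul t z i
      rw [hall i (Finset.mem_univ i), mul_zero] at this
      exact (mul_eq_zero.mp this.symm).resolve_left hP0
    have : Finset.gcd Finset.univ z = 0 :=
      Finset.gcd_eq_zero_iff.mpr fun i _ => hz0 i
    rw [h1] at this
    exact one_ne_zero this
  have hgpos : 0 < g := lt_of_le_of_ne (gcd_nonneg' _) (Ne.symm hg0)
  obtain ⟨hgw, hgcd1⟩ := gcd_div_self (wvec t z) hg0
  have hgw' : ∀ i, g * yfun t z i = wvec t z i := hgw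
  refine ⟨hgcd1, ?_, ?_, ?_⟩
  · -- the cubic equation
    have hc : ∀ i, (t i) ^ 3 * (wvec t z i) ^ 3 = P ^ 3 * (z i) ^ 3 := by
      intro i
      have h := wvec_mul t z i
      linear_combination ((t i * wvec t z i) ^ 2 + (t i * wvec t z i) * (P * z i)
        + (P * z i) ^ 2) * h
    have hw3 : (t 0) ^ 3 * (wvec t z 0) ^ 3 + (t 1) ^ 3 * (wvec t z 1) ^ 3 +
        (t 2) ^ 3 * (wvec t z 2) ^ 3 + (t 3) ^ 3 * (wvec t z 3) ^ 3 = 0 := by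
      linear_combination hc 0 + hc 1 + hc 2 + hc 3 + P ^ 3 * h2
    have hcube : g ^ 3 * ((t 0) ^ 3 * yfun t z 0 ^ 3 + (t 1) ^ 3 * yfun t z 1 ^ 3 +
        (t 2) ^ 3 * yfun t z 2 ^ 3 + (t 3) ^ 3 * yfun t z 3 ^ 3) = 0 := by
      linear_combination hw3 +
        (t 0) ^ 3 * ((g * yfun t z 0) ^ 2 + (g * yfun t z 0) * wvec t z 0
          + (wvec t z 0) ^ 2) * hgw' 0 +
        (t 1) ^ 3 * ((g * yfun t z 1) ^ 2 + (g * yfun t z 1) * wvec t z 1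
          + (wvec t z 1) ^ 2) * hgw' 1 +
        (t 2) ^ 3 * ((g * yfun t z 2) ^ 2 + (g * yfun t z 2) * wvec t z 2
          + (wvec t z 2) ^ 2) * hgw' 2 +
        (t 3) ^ 3 * ((g * yfun t z 3) ^ 2 + (g * yfun t z 3) * wvec t z 3
          + (wvec t z 3) ^ 2) * hgw' 3
    exact (mul_eq_zero.mp hcube).resolve_left (pow_ne_zero 3 hg0)
  · -- not on a line
    rintro ⟨u, v, hind, hcub, a, b, hab⟩
    have htQ : ∀ i, (t i : ℚ) ≠ 0 := fun i => Int.cast_ne_zero.2 (ht i)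
    have hPQ : (P : ℚ) ≠ 0 := Int.cast_ne_zero.2 hP0
    set u' : Fin 4 → ℚ := fun m => (t m : ℚ) * u m with hu'
    set v' : Fin 4 → ℚ := fun m => (t m : ℚ) * v m with hv'
    have hind2 := LinearIndependent.pair_iff.mp hind
    have hind' : LinearIndependent ℚ ![u', v'] := by
      rw [LinearIndependent.pair_iff]
      intro s r hsr
      apply hind2 s r
      funext m
      have hm := congrFun hsr m
      simp only [Pi.add_apply, Pi.smul_apply, smul_eq_mul, Pi.zero_apply, hu', hv'] at hm ⊢
      have h' : (t m : ℚ) * (s * u m + r * v m) = 0 := by linear_combination hm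
      exact (mul_eq_zero.mp h').resolve_left (htQ m)
    have hcub' : ∀ A B : ℚ, ∑ m, (A * u' m + B * v' m) ^ 3 = 0 := by
      intro A B
      rw [← hcub A B]
      exact Finset.sum_congr rfl fun m _ => by rw [hu', hv']; ring
    have hz' : ∀ m, ((z m : ℚ)) = ((g : ℚ) * a / (P : ℚ)) * u' m
        + ((g : ℚ) * b / (P : ℚ)) * v' m := by
      intro m
      have hint : t m * (g * yfun t z m) = P * z m := by
        rw [hgw' m]; exact wvec_mul t z m
      have hc1 : (t m : ℚ) * ((g : ℚ) * (yfun t z m : ℚ)) = (P : ℚ) * (z m : ℚ) := by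
        exact_mod_cast congrArg (Int.cast : ℤ → ℚ) hint
      rw [hu', hv']
      have hzm : (z m : ℚ) = (t m : ℚ) * ((g : ℚ) * (yfun t z m : ℚ)) / (P : ℚ) := by
        rw [eq_div_iff hPQ]; linear_combination -hc1
      rw [hzm, hab m]
      field_simp
    have := fermat_line_classify u' v' hind' hcub'
      ((g : ℚ) * a / (P : ℚ)) ((g : ℚ) * b / (P : ℚ)) (fun m => (z m : ℚ)) hz'
    apply h3
    rcases this with ⟨ha, hb⟩ | ⟨ha, hb⟩ | ⟨ha, hb⟩
    · exact Or.inl ⟨by exact_mod_cast (show (z 0 : ℚ) + (z 1 : ℚ) = 0 from ha),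
        by exact_mod_cast (show (z 2 : ℚ) + (z 3 : ℚ) = 0 from hb)⟩
    · exact Or.inr (Or.inl ⟨by exact_mod_cast (show (z 0 : ℚ) + (z 2 : ℚ) = 0 from ha),
        by exact_mod_cast (show (z 1 : ℚ) + (z 3 : ℚ) = 0 from hb)⟩)
    · exact Or.inr (Or.inr ⟨by exact_mod_cast (show (z 0 : ℚ) + (z 3 : ℚ) = 0 from ha),
        by exact_mod_cast (show (z 1 : ℚ) + (z 2 : ℚ) = 0 from hb)⟩)
  · -- the height bound
    intro i
    have hTz : (|z i| : ℝ) * (T : ℝ) ≤ B := by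
      have := h4 i
      rw [div_eq_mul_inv] at this
      calc (|z i| : ℝ) * (T : ℝ) ≤ (B * (T : ℝ)⁻¹) * (T : ℝ) := by
            apply mul_le_mul_of_nonneg_right this (le_of_lt hTR)
        _ = B := by field_simp
    have habs : |wvec t z i| = g * |yfun t z i| := by
      rw [← hgw' i, abs_mul, abs_of_nonneg (le_of_lt hgpos)]
    have hyw : |yfun t z i| ≤ |wvec t z i| := by
      rw [habs]; nlinarith [abs_nonneg (yfun t z i), hgpos]
    have hwT : |t i| * |wvec t z i| = T * |z i| := by
      rw [← abs_mul, wvec_mul t z i, abs_mul, hPT]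
    have hti : 1 ≤ |t i| := Int.one_le_abs (by exact_mod_cast ht i)
    have hint : |yfun t z i| ≤ T * |z i| := by
      calc |yfun t z i| ≤ |wvec t z i| := hyw
        _ ≤ |t i| * |wvec t z i| := by nlinarith [abs_nonneg (wvec t z i)]
        _ = T * |z i| := hwT
    calc (|yfun t z i| : ℝ) ≤ ((T * |z i| : ℤ) : ℝ) := by exact_mod_cast hint
      _ = (|z i| : ℝ) * (T : ℝ) := by push_cast; ring
      _ ≤ B := hTz

lemma main_inj (hT : T = |t 0 * t 1 * t 2 * t 3|) (hT0 : T ≠ 0)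
    (z z' : Fin 4 → ℤ)
    (h1 : Finset.gcd Finset.univ z = 1) (h1' : Finset.gcd Finset.univ z' = 1)
    (heq : yfun t z = yfun t z') : z = z' := by
  classical
  have ht : ∀ i : Fin 4, t i ≠ 0 := by
    intro i h0
    apply hT0
    rw [hT, abs_eq_zero]
    fin_cases i <;>
      simp only [Fin.zero_eta, Fin.mk_one, Fin.reduceFinMk, Fin.isValue] at h0 <;>
      rw [h0] <;> ring
  set P : ℤ := t 0 * t 1 * t 2 * t 3 with hPdef
  have hP0 : P ≠ 0 :=
    mul_ne_zero (mul_ne_zero (mul_ne_zero (ht 0) (ht 1)) (ht 2)) (ht 3)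
  have hgne : ∀ w : Fin 4 → ℤ, Finset.gcd Finset.univ w = 1 →
      Finset.gcd Finset.univ (wvec t w) ≠ 0 := by
    intro w hw
    rw [Ne, Finset.gcd_eq_zero_iff]
    intro hall
    have hz0 : ∀ i, w i = 0 := by
      intro i
      have := wvec_mul t w i
      rw [hall i (Finset.mem_univ i), mul_zero] at this
      exact (mul_eq_zero.mp this.symm).resolve_left hP0
    have : Finset.gcd Finset.univ w = 0 :=
      Finset.gcd_eq_zero_iff.mpr fun i _ => hz0 i
    rw [hw] at this
    exact one_ne_zero this
  have hg0 := hgne z h1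
  have hg0' := hgne z' h1'
  set g : ℤ := Finset.gcd Finset.univ (wvec t z) with hgdef
  set g' : ℤ := Finset.gcd Finset.univ (wvec t z') with hgdef'
  obtain ⟨hgw, -⟩ := gcd_div_self (wvec t z) hg0
  obtain ⟨hgw', -⟩ := gcd_div_self (wvec t z') hg0'
  have h5 : ∀ i, g' * wvec t z i = g * wvec t z' i := by
    intro i
    rw [← hgw i, ← hgw' i]
    have := congrFun heq i
    rw [yfun, yfun] at this
    rw [this]
    ring
  have h6 : ∀ i, g' * z i = g * z' i := by
    intro i
    have hmul : P * (g' * z i) = P * (g * z' i) := by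
      linear_combination (t i) * h5 i - g' * wvec_mul t z i + g * wvec_mul t z' i
    exact mul_left_cancel₀ hP0 hmul
  have hgg : g' = g := by
    have hgcd : Finset.gcd Finset.univ (fun i => g' * z i) =
        Finset.gcd Finset.univ (fun i => g * z' i) := by
      congr 1
      exact funext h6
    rw [Finset.gcd_mul_left, Finset.gcd_mul_left, h1, h1', mul_one, mul_one,
      Int.normalize_of_nonneg (gcd_nonneg' _), Int.normalize_of_nonneg (gcd_nonneg' _)]
      at hgcd
    exact hgcd
  funext i
  have := h6 i
  rw [hgg] at this
  exact mul_left_cancel₀ hg0 this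

end Main

theorem stmt_18 (t : Fin 4 → ℤ) (hprim : Finset.gcd Finset.univ t = 1)
    (T : ℤ) (hT : T = |t 0 * t 1 * t 2 * t 3|) (hT0 : T ≠ 0)
    (B : ℝ) (hB : (T : ℝ) ≤ B) :
    fermatCount (B / T) ≤ heightCount t B := by
  classical
  haveI hfin : Finite {y : Fin 4 → ℤ //
      Finset.gcd Finset.univ y = 1 ∧
      (t 0) ^ 3 * y 0 ^ 3 + (t 1) ^ 3 * y 1 ^ 3 + (t 2) ^ 3 * y 2 ^ 3 +
        (t 3) ^ 3 * y 3 ^ 3 = 0 ∧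
      ¬ OnALine t y ∧
      ∀ i, (|y i| : ℝ) ≤ B} :=
    finite_pred _ B fun y hy => hy.2.2.2
  rw [fermatCount, heightCount]
  exact Nat.card_le_card_of_injective
    (fun x => ⟨yfun t x.1, main_map t T hT hT0 B hB x.1 x.2.1 x.2.2.1 x.2.2.2.1 x.2.2.2.2⟩)
    (fun x x' h => Subtype.ext
      (main_inj t T hT hT0 x.1 x'.1 x.2.1 x'.2.1 (congrArg Subtype.val h)))
end
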